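/- arXiv:2407.15357 — 4 statements merged into one kernel-verified Lean document; each statement's English description precedes it below -/
import Mathlib

section
/- Let a be a self-adjoint matrix and define the superoperator L_a(ρ) = 2aρa - (a²ρ + ρa²). If Z is a standard Gaussian random variable, then for all t ≥ 0, E[e^{-i√(2t)·Z·a} ρ e^{i√(2t)·Z·a}] = e^{t L_a}(ρ) for every matrix ρ. -/
open scoped Matrix.Norms.L2Operator

noncomputable instance {d : Type*} [Fintype d] [DecidableEq d] :
    IsTopologicalRing (Matrix d d ℂ →L[ℂ] Matrix d d ℂ) :=
  @NonUnitalSeminormedRing.toIsTopologicalRing (Matrix d d ℂ →L[ℂ] Matrix d d ℂ)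
    SeminormedRing.toNonUnitalSeminormedRing

/-!
Write `a = ∑ⱼ λⱼ Pⱼ` with spectral projections `Pⱼ` summing to `1`. Then `ρ = ∑ₚ,q Pₚ ρ P_q`, and
each piece `Pₚ ρ P_q` is a joint eigenvector: the conjugation by `e^{-i r a}` multiplies it by
`e^{i r (λ_q - λₚ)}`, and `L_a` multiplies it by `-(λₚ - λ_q)²`. On a single piece the identity
is therefore the Gaussian characteristic function `E[e^{i c Z}] = e^{-c²/2}` at
`c = √(2t) (λ_q - λₚ)`, and both sides are linear in `ρ`.
-/

open NormedSpace MeasureTheory ProbabilityTheory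
open Complex (I)

section ExpOfEigenvector

variable {𝕂 𝔸 E : Type*} [RCLike 𝕂] [NormedRing 𝔸] [NormedAlgebra 𝕂 𝔸] [CompleteSpace 𝔸]
  [NormedAddCommGroup E] [NormedSpace 𝕂 E]

theorem ContinuousLinearMap.map_exp_of_map_pow (φ : 𝔸 →L[𝕂] E) {x : 𝔸} {μ : 𝕂} {y : E}
    (h : ∀ n : ℕ, φ (x ^ n) = μ ^ n • y) : φ (exp x) = exp μ • y := by
  have hx := (exp_series_hasSum_exp' (𝕂 := 𝕂) x).mapL φ
  have hμ := (exp_series_hasSum_exp' (𝕂 := 𝕂) μ).smul_const y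
  simp only [map_smul, h, smul_smul, smul_eq_mul] at hx hμ
  exact hx.unique hμ

theorem exp_mul_of_mul_eq_smul {x y : 𝔸} {μ : 𝕂} (h : x * y = μ • y) :
    exp x * y = exp μ • y :=
  ((ContinuousLinearMap.mul 𝕂 𝔸).flip y).map_exp_of_map_pow fun n => by
    induction n with
    | zero => simp
    | succ n ih =>
      simp only [ContinuousLinearMap.flip_apply, ContinuousLinearMap.mul_apply'] at ih ⊢
      rw [pow_succ', mul_assoc, ih, mul_smul_comm, h, smul_smul, pow_succ]

theorem mul_exp_of_mul_eq_smul {x y : 𝔸} {μ : 𝕂} (h : y * x = μ • y) :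
    y * exp x = exp μ • y :=
  (ContinuousLinearMap.mul 𝕂 𝔸 y).map_exp_of_map_pow fun n => by
    induction n with
    | zero => simp
    | succ n ih =>
      simp only [ContinuousLinearMap.mul_apply'] at ih ⊢
      rw [pow_succ, ← mul_assoc, ih, smul_mul_assoc, h, smul_smul, pow_succ]

theorem ContinuousLinearMap.exp_apply_of_apply_eq_smul [CompleteSpace E] {A : E →L[𝕂] E}
    {y : E} {μ : 𝕂} (h : A y = μ • y) : exp A y = exp μ • y :=
  (ContinuousLinearMap.apply 𝕂 E y).map_exp_of_map_pow fun n => by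
    induction n with
    | zero => simp
    | succ n ih =>
      simp only [ContinuousLinearMap.apply_apply] at ih ⊢
      rw [pow_succ', mul_apply_eq_comp, ih, map_smul, h, smul_smul, pow_succ]

end ExpOfEigenvector

namespace Matrix

variable {α n : Type*} [Semiring α] [Fintype n] [DecidableEq n]

theorem diagonal_mul_single_one (v : n → α) (j : n) :
    diagonal v * single j j 1 = v j • single j j 1 := by
  ext i k
  simp only [diagonal_mul, single_apply, smul_apply, smul_eq_mul]
  grind

theorem single_one_mul_diagonal (v : n → α) (j : n) :
    single j j 1 * diagonal v = v j • single j j 1 := by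
  ext i k
  simp only [mul_diagonal, single_apply, smul_apply, smul_eq_mul]
  grind

end Matrix

namespace Matrix.IsHermitian

variable {𝕜 n : Type*} [RCLike 𝕜] [Fintype n] [DecidableEq n] {A : Matrix n n 𝕜}

noncomputable def eigenprojection (hA : A.IsHermitian) (j : n) : Matrix n n 𝕜 :=
  Unitary.conjStarAlgAut 𝕜 _ hA.eigenvectorUnitary (single j j 1)

theorem sum_eigenprojection (hA : A.IsHermitian) : ∑ j, hA.eigenprojection j = 1 := by
  simp only [eigenprojection, ← map_sum, sum_single_one, map_one]

theorem mul_eigenprojection (hA : A.IsHermitian) (j : n) :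
    A * hA.eigenprojection j = (hA.eigenvalues j : 𝕜) • hA.eigenprojection j := by
  have h := congrArg (Unitary.conjStarAlgAut 𝕜 _ hA.eigenvectorUnitary)
    (diagonal_mul_single_one (RCLike.ofReal ∘ hA.eigenvalues) j)
  rwa [map_mul, map_smul, ← hA.spectral_theorem] at h

theorem eigenprojection_mul (hA : A.IsHermitian) (j : n) :
    hA.eigenprojection j * A = (hA.eigenvalues j : 𝕜) • hA.eigenprojection j := by
  have h := congrArg (Unitary.conjStarAlgAut 𝕜 _ hA.eigenvectorUnitary)
    (single_one_mul_diagonal (RCLike.ofReal ∘ hA.eigenvalues) j)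
  rwa [map_mul, map_smul, ← hA.spectral_theorem] at h

end Matrix.IsHermitian

theorem eq_sum_sum_mul_mul_of_sum_eq_one {R ι : Type*} [NonAssocSemiring R] [Fintype ι]
    {P : ι → R} (hP : ∑ i, P i = 1) (x : R) : x = ∑ i, ∑ j, P i * x * P j := by
  rw [← Finset.sum_mul_sum, ← Finset.sum_mul, hP, one_mul, mul_one]

section GaussianMixing

variable {𝔸 : Type*} [NormedRing 𝔸] [NormedAlgebra ℂ 𝔸] [CompleteSpace 𝔸] {a y : 𝔸} {l m : ℝ}

theorem conj_exp_of_mul_eq_smul (hl : a * y = (l : ℂ) • y) (hr : y * a = (m : ℂ) • y) (r : ℝ) :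
    exp ((-I * r) • a) * y * exp ((I * r) • a) = Complex.exp ((r * (m - l) : ℝ) * I) • y := by
  have hl' : ((-I * r) • a) * y = (-I * r * l) • y := by rw [smul_mul_assoc, hl, smul_smul]
  have hr' : y * ((I * r) • a) = (I * r * m) • y := by rw [mul_smul_comm, hr, smul_smul]
  rw [exp_mul_of_mul_eq_smul hl', smul_mul_assoc, mul_exp_of_mul_eq_smul hr', smul_smul,
    ← Complex.exp_eq_exp_ℂ, ← Complex.exp_add]
  congr 2
  push_cast
  ring

theorem integrable_gaussianReal_conj_exp (hl : a * y = (l : ℂ) • y)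
    (hr : y * a = (m : ℂ) • y) (s : ℝ) :
    Integrable (fun z : ℝ ↦ exp ((-I * ((s * z : ℝ) : ℂ)) • a) * y *
      exp ((I * ((s * z : ℝ) : ℂ)) • a)) (gaussianReal 0 1) := by
  simp_rw [conj_exp_of_mul_eq_smul hl hr]
  exact ((integrable_const (1 : ℝ)).mono' (by fun_prop)
    (ae_of_all _ fun _ ↦ (Complex.norm_exp_ofReal_mul_I _).le)).smul_const y

theorem integral_gaussianReal_conj_exp (hl : a * y = (l : ℂ) • y) (hr : y * a = (m : ℂ) • y)
    (s : ℝ) :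
    ∫ z, exp ((-I * ((s * z : ℝ) : ℂ)) • a) * y * exp ((I * ((s * z : ℝ) : ℂ)) • a)
      ∂gaussianReal 0 1 = Complex.exp (-(s ^ 2 / 2 * (l - m) ^ 2) : ℝ) • y := by
  have hphase : ∀ z : ℝ, ((s * z * (m - l) : ℝ) : ℂ) * I = ((s * (m - l) : ℝ) : ℂ) * z * I := by
    intro z; push_cast; ring
  simp_rw [conj_exp_of_mul_eq_smul hl hr, hphase]
  rw [integral_smul_const, ← charFun_apply_real, charFun_gaussianReal]
  congr 2
  push_cast
  ring

theorem integral_gaussianReal_conj_exp_eq_exp_apply (hl : a * y = (l : ℂ) • y)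
    (hr : y * a = (m : ℂ) • y) (L : 𝔸 →L[ℂ] 𝔸)
    (hL : ∀ ρ, L ρ = (2 : ℂ) • (a * ρ * a) - (a ^ 2 * ρ + ρ * a ^ 2)) {t : ℝ} (ht : 0 ≤ t) :
    ∫ z, exp ((-I * ((Real.sqrt (2 * t) * z : ℝ) : ℂ)) • a) * y *
        exp ((I * ((Real.sqrt (2 * t) * z : ℝ) : ℂ)) • a) ∂gaussianReal 0 1 =
      exp ((t : ℂ) • L) y := by
  have hLy : ((t : ℂ) • L) y = ((t : ℂ) * -(l - m) ^ 2) • y := by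
    have hl2 : a ^ 2 * y = ((l : ℂ) ^ 2) • y := by
      rw [sq, mul_assoc, hl, mul_smul_comm, hl, smul_smul, sq]
    have hr2 : y * a ^ 2 = ((m : ℂ) ^ 2) • y := by
      rw [sq, ← mul_assoc, hr, smul_mul_assoc, hr, smul_smul, sq]
    rw [smul_apply, hL, hl2, hr2, hl, smul_mul_assoc, hr]
    module
  rw [integral_gaussianReal_conj_exp hl hr, Real.sq_sqrt (by positivity),
    ContinuousLinearMap.exp_apply_of_apply_eq_smul hLy, ← Complex.exp_eq_exp_ℂ]
  congr 2
  push_cast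
  ring

end GaussianMixing

theorem integral_gaussianReal_conj_exp_eq_exp_apply_of_sum_eq_one {𝔸 ι : Type*} [NormedRing 𝔸]
    [NormedAlgebra ℂ 𝔸] [CompleteSpace 𝔸] [Fintype ι] {a : 𝔸} {P : ι → 𝔸} {l : ι → ℝ}
    (hP : ∑ i, P i = 1) (haP : ∀ i, a * P i = (l i : ℂ) • P i)
    (hPa : ∀ i, P i * a = (l i : ℂ) • P i) (L : 𝔸 →L[ℂ] 𝔸)
    (hL : ∀ ρ, L ρ = (2 : ℂ) • (a * ρ * a) - (a ^ 2 * ρ + ρ * a ^ 2)) {t : ℝ} (ht : 0 ≤ t)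
    (ρ : 𝔸) :
    ∫ z, exp ((-I * ((Real.sqrt (2 * t) * z : ℝ) : ℂ)) • a) * ρ *
        exp ((I * ((Real.sqrt (2 * t) * z : ℝ) : ℂ)) • a) ∂gaussianReal 0 1 =
      exp ((t : ℂ) • L) ρ := by
  have hl (p q : ι) : a * (P p * ρ * P q) = (l p : ℂ) • (P p * ρ * P q) := by
    rw [← mul_assoc, ← mul_assoc, haP, smul_mul_assoc, smul_mul_assoc]
  have hr (p q : ι) : P p * ρ * P q * a = (l q : ℂ) • (P p * ρ * P q) := by
    rw [mul_assoc, hPa, mul_smul_comm]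
  have hint (p q : ι) := integrable_gaussianReal_conj_exp (hl p q) (hr p q) (Real.sqrt (2 * t))
  rw [eq_sum_sum_mul_mul_of_sum_eq_one hP ρ]
  simp only [Finset.mul_sum, Finset.sum_mul, map_sum]
  rw [integral_finsetSum _ fun p _ ↦ integrable_finsetSum _ fun q _ ↦ hint p q]
  refine Finset.sum_congr rfl fun p _ ↦ ?_
  rw [integral_finsetSum _ fun q _ ↦ hint p q]
  exact Finset.sum_congr rfl fun q _ ↦
    integral_gaussianReal_conj_exp_eq_exp_apply (hl p q) (hr p q) L hL ht

/-- For a self-adjoint matrix `a` and `L_a(ρ) = 2aρa - (a²ρ + ρa²)`, averaging the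
conjugations `e^{-i√(2t) Z a} ρ e^{i√(2t) Z a}` over a standard Gaussian `Z` yields
the semigroup `e^{t L_a}(ρ)`. -/
theorem gaussian_unitary_mixing {d : Type*} [Fintype d] [DecidableEq d]
    (a : Matrix d d ℂ) (ha : a.IsHermitian)
    (La : Matrix d d ℂ →L[ℂ] Matrix d d ℂ)
    (hLa : ∀ ρ, La ρ = (2 : ℂ) • (a * ρ * a) - (a ^ 2 * ρ + ρ * a ^ 2))
    (t : ℝ) (ht : 0 ≤ t) (ρ : Matrix d d ℂ) :
    (∫ z, NormedSpace.exp ((-(Complex.I) * ((Real.sqrt (2 * t) * z : ℝ) : ℂ)) • a) * ρ *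
        NormedSpace.exp ((Complex.I * ((Real.sqrt (2 * t) * z : ℝ) : ℂ)) • a)
      ∂(ProbabilityTheory.gaussianReal 0 1)) =
    NormedSpace.exp ((t : ℂ) • La) ρ :=
  integral_gaussianReal_conj_exp_eq_exp_apply_of_sum_eq_one ha.sum_eigenprojection
    ha.mul_eigenprojection ha.eigenprojection_mul La hLa ht ρ
end

section
/- Let S = {X, Y} (single-qubit Pauli X and Y) and define the Lipschitz seminorm ‖|x|‖_S = max(‖[X,x]‖, ‖[Y,x]‖) (operator norm of commutators). For the replacer map Φ*(x) = K₀*xK₀ + K₁*xK₁ with K₀ = |0⟩⟨0|, K₁ = |0⟩⟨1|, one has ‖Φ*(x) - x‖ ≤ 2·‖|x|‖_S for all 2×2 matrices x. -/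
open Matrix

open scoped Matrix.Norms.L2Operator

/-!
Write `K₀ = (1 + i X Y)/2` and `K₁ = (X - i Y)/2`. Since `K₀ᴴK₀ + K₁ᴴK₁ = 1`, we get
`Φ*(x) - x = K₀ᴴ[x, K₀] + K₁ᴴ[x, K₁]`, and the Leibniz rule `[x, XY] = X[x, Y] + [x, X]Y`
expresses both commutators through `[x, X]` and `[x, Y]` with coefficients of total norm `1`,
so each term is bounded by `max(‖[X, x]‖, ‖[Y, x]‖)` because `‖X‖, ‖Y‖, ‖K₀‖, ‖K₁‖ ≤ 1`.
-/

section Ring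

variable {R : Type*} [Ring R]

theorem kraus_sub_eq_sum_mul_commutator {a₀ a₁ b₀ b₁ : R} (h : a₀ * b₀ + a₁ * b₁ = 1)
    (x : R) :
    a₀ * x * b₀ + a₁ * x * b₁ - x = a₀ * (x * b₀ - b₀ * x) + a₁ * (x * b₁ - b₁ * x) := by
  calc a₀ * x * b₀ + a₁ * x * b₁ - x
      = a₀ * x * b₀ + a₁ * x * b₁ - (a₀ * b₀ + a₁ * b₁) * x := by rw [h, one_mul]
    _ = _ := by noncomm_ring

theorem commutator_mul_eq_add (x p q : R) :
    x * (p * q) - p * q * x = p * (x * q - q * x) + (x * p - p * x) * q := by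
  noncomm_ring

end Ring

theorem norm_le_one_of_star_mul_self_eq_one {A : Type*} [NormedRing A] [StarRing A] [CStarRing A]
    [NormOneClass A] {a : A} (h : star a * a = 1) : ‖a‖ ≤ 1 := by
  have := CStarRing.norm_star_mul_self (x := a)
  rw [h, norm_one] at this
  nlinarith [norm_nonneg a]

section Replacer

open Complex

variable {A : Type*} [NormedRing A] [NormedAlgebra ℂ A]

/-- For the Pauli matrices `X`, `Y` these are the Kraus operators `|0⟩⟨0|` and `|0⟩⟨1|`
of the replacer channel. -/
noncomputable def replacerKraus₀ (X Y : A) : A := (2⁻¹ : ℂ) • (1 + I • (X * Y))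

noncomputable def replacerKraus₁ (X Y : A) : A := (2⁻¹ : ℂ) • (X - I • Y)

theorem norm_two_inv_smul (a : A) : ‖(2⁻¹ : ℂ) • a‖ = 2⁻¹ * ‖a‖ := by
  rw [norm_smul, norm_inv, Complex.norm_two]

theorem norm_replacerKraus₀_le [NormOneClass A] {X Y : A} (hX : ‖X‖ ≤ 1) (hY : ‖Y‖ ≤ 1) :
    ‖replacerKraus₀ X Y‖ ≤ 1 := by
  have : ‖X * Y‖ ≤ 1 := (norm_mul_le X Y).trans (mul_le_one₀ hX (norm_nonneg Y) hY)
  rw [replacerKraus₀, norm_two_inv_smul]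
  have := (norm_add_le (1 : A) (I • (X * Y))).trans_eq
    (by rw [norm_one, norm_smul, norm_I, one_mul])
  linarith

theorem norm_replacerKraus₁_le {X Y : A} (hX : ‖X‖ ≤ 1) (hY : ‖Y‖ ≤ 1) :
    ‖replacerKraus₁ X Y‖ ≤ 1 := by
  rw [replacerKraus₁, norm_two_inv_smul]
  have := (norm_sub_le X (I • Y)).trans_eq (by rw [norm_smul, norm_I, one_mul])
  linarith

theorem norm_commutator_replacerKraus₀_le {X Y : A} (hX : ‖X‖ ≤ 1) (hY : ‖Y‖ ≤ 1) (x : A) :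
    ‖x * replacerKraus₀ X Y - replacerKraus₀ X Y * x‖ ≤
      max ‖X * x - x * X‖ ‖Y * x - x * Y‖ := by
  have hcomm : x * replacerKraus₀ X Y - replacerKraus₀ X Y * x
      = ((2⁻¹ : ℂ) * I) • (X * (x * Y - Y * x) + (x * X - X * x) * Y) := by
    rw [replacerKraus₀, ← commutator_mul_eq_add, mul_smul]
    simp only [mul_smul_comm, smul_mul_assoc, smul_add, smul_sub, mul_add, add_mul, mul_one,
      one_mul]
    abel
  have hX' : ‖X * (x * Y - Y * x)‖ ≤ ‖Y * x - x * Y‖ := by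
    rw [norm_sub_rev (Y * x)]
    exact (norm_mul_le _ _).trans (mul_le_of_le_one_left (norm_nonneg _) hX)
  have hY' : ‖(x * X - X * x) * Y‖ ≤ ‖X * x - x * X‖ := by
    rw [norm_sub_rev (X * x)]
    exact (norm_mul_le _ _).trans (mul_le_of_le_one_right (norm_nonneg _) hY)
  rw [hcomm, norm_smul, norm_mul, norm_inv, Complex.norm_two, norm_I, mul_one]
  have := norm_add_le (X * (x * Y - Y * x)) ((x * X - X * x) * Y)
  have := le_max_left ‖X * x - x * X‖ ‖Y * x - x * Y‖
  have := le_max_right ‖X * x - x * X‖ ‖Y * x - x * Y‖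
  linarith

theorem norm_commutator_replacerKraus₁_le (X Y x : A) :
    ‖x * replacerKraus₁ X Y - replacerKraus₁ X Y * x‖ ≤
      max ‖X * x - x * X‖ ‖Y * x - x * Y‖ := by
  have hcomm : x * replacerKraus₁ X Y - replacerKraus₁ X Y * x
      = (2⁻¹ : ℂ) • (I • (Y * x - x * Y) - (X * x - x * X)) := by
    simp only [replacerKraus₁, mul_smul_comm, smul_mul_assoc, smul_sub, mul_sub, sub_mul]
    abel
  rw [hcomm, norm_two_inv_smul]
  have := (norm_sub_le (I • (Y * x - x * Y)) (X * x - x * X)).trans_eq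
    (by rw [norm_smul, norm_I, one_mul])
  have := le_max_left ‖X * x - x * X‖ ‖Y * x - x * Y‖
  have := le_max_right ‖X * x - x * X‖ ‖Y * x - x * Y‖
  linarith

theorem norm_replacer_adjoint_sub_le [StarRing A] [NormedStarGroup A] [NormOneClass A]
    {X Y : A} (hX : ‖X‖ ≤ 1) (hY : ‖Y‖ ≤ 1)
    (hkraus : star (replacerKraus₀ X Y) * replacerKraus₀ X Y
      + star (replacerKraus₁ X Y) * replacerKraus₁ X Y = 1) (x : A) :
    ‖star (replacerKraus₀ X Y) * x * replacerKraus₀ X Y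
      + star (replacerKraus₁ X Y) * x * replacerKraus₁ X Y - x‖
      ≤ 2 * max ‖X * x - x * X‖ ‖Y * x - x * Y‖ := by
  rw [kraus_sub_eq_sum_mul_commutator hkraus, two_mul]
  refine (norm_add_le _ _).trans (add_le_add ?_ ?_) <;>
    refine (norm_mul_le _ _).trans ((mul_le_of_le_one_left (norm_nonneg _) ?_).trans ?_)
  · rw [norm_star]; exact norm_replacerKraus₀_le hX hY
  · exact norm_commutator_replacerKraus₀_le hX hY x
  · rw [norm_star]; exact norm_replacerKraus₁_le hX hY
  · exact norm_commutator_replacerKraus₁_le X Y x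

end Replacer

/-- Lipschitz bound for the adjoint of the replacer channel with Kraus operators
`K₀ = |0⟩⟨0|`, `K₁ = |0⟩⟨1|`: for all `x`,
`‖Φ*(x) - x‖ ≤ 2 max(‖[X,x]‖, ‖[Y,x]‖)`. -/
theorem replacer_lipschitz (X Y K₀ K₁ : Matrix (Fin 2) (Fin 2) ℂ)
    (hX : X = !![0, 1; 1, 0]) (hY : Y = !![0, Complex.I; -Complex.I, 0])
    (hK₀ : K₀ = !![1, 0; 0, 0]) (hK₁ : K₁ = !![0, 1; 0, 0])
    (x : Matrix (Fin 2) (Fin 2) ℂ) :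
    ‖K₀ᴴ * x * K₀ + K₁ᴴ * x * K₁ - x‖ ≤
      2 * max ‖X * x - x * X‖ ‖Y * x - x * Y‖ := by
  have hXn : ‖X‖ ≤ 1 := norm_le_one_of_star_mul_self_eq_one <| by
    subst hX; ext i j; fin_cases i <;> fin_cases j <;> simp [Matrix.mul_apply, Fin.sum_univ_two]
  have hYn : ‖Y‖ ≤ 1 := norm_le_one_of_star_mul_self_eq_one <| by
    subst hY; ext i j; fin_cases i <;> fin_cases j <;> simp [Matrix.mul_apply, Fin.sum_univ_two]
  have hK₀X : K₀ = replacerKraus₀ X Y := by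
    subst_vars; ext i j; fin_cases i <;> fin_cases j <;> norm_num [replacerKraus₀]
  have hK₁X : K₁ = replacerKraus₁ X Y := by
    subst_vars; ext i j; fin_cases i <;> fin_cases j <;> norm_num [replacerKraus₁]
  have hkraus : star K₀ * K₀ + star K₁ * K₁ = 1 := by
    subst_vars; ext i j; fin_cases i <;> fin_cases j <;> simp [Matrix.mul_apply, Fin.sum_univ_two]
  subst hK₀X hK₁X
  exact norm_replacer_adjoint_sub_le hXn hYn hkraus x
end

section
/- On the n-qubit system, let X_j, Y_j denote single-site Pauli operators and S = {X_j, Y_j : 1 ≤ j ≤ n}. Then the operator x = Σ_{j=1}^n X_j satisfies ‖x‖_∞ = n while ‖|x|‖_S := sup_{s∈S} ‖[s,x]‖_∞ = 2. Consequently, for the maximally mixed replacer channel Φ₂(ρ) = Tr(ρ)·I/2ⁿ, the Lipschitz complexity C_S(Φ₂) is at least n/2. -/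
open scoped Matrix.Norms.L2Operator

/-- The single-site Pauli `X` operator on qubit `j` of an `n`-qubit system. -/
noncomputable def pauliX (n : ℕ) (j : Fin n) :
    Matrix (Fin n → Fin 2) (Fin n → Fin 2) ℂ :=
  Matrix.of fun f g => if f j ≠ g j ∧ ∀ i, i ≠ j → f i = g i then 1 else 0

/-- The single-site Pauli `Y` operator on qubit `j` of an `n`-qubit system
(with the convention `Y = [[0, i], [-i, 0]]`). -/
noncomputable def pauliY (n : ℕ) (j : Fin n) :
    Matrix (Fin n → Fin 2) (Fin n → Fin 2) ℂ :=
  Matrix.of fun f g =>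
    if f j = 0 ∧ g j = 1 ∧ ∀ i, i ≠ j → f i = g i then Complex.I
    else if f j = 1 ∧ g j = 0 ∧ ∀ i, i ≠ j → f i = g i then -Complex.I else 0

/-! The `Xⱼ` are commuting permutation matrices (bit flips), so `[Xⱼ, ∑ᵢ Xᵢ] = 0` and
`[Yⱼ, ∑ᵢ Xᵢ] = [Yⱼ, Xⱼ] = 2i Zⱼ` has norm `2`; the all-ones vector is an eigenvector of `∑ᵢ Xᵢ`
with eigenvalue `n`. As `∑ᵢ Xᵢ` is traceless, `x = ½ ∑ᵢ Xᵢ` gives `‖Φ₂*(x) - x‖ = n/2` with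
`‖|x|‖_S = 1`.

The supremum defining `C_S(Φ₂)` is finite: if `‖|x|‖_S ≤ 1`, then `[Zⱼ, x]`, with
`Zⱼ = -i YⱼXⱼ`, has norm at most `2` and bounds the off-diagonal entries of `x` by `1`, while
`[Xⱼ, x]` makes the diagonal of `x` `1`-Lipschitz on the Hamming cube. So every entry of
`Φ₂*(x) - x` has modulus at most `n`, and its norm is at most `4ⁿ n`. -/

open Matrix

namespace Matrix

variable {𝕜 m n : Type*} [RCLike 𝕜] [Fintype m] [Fintype n]

lemma norm_trace_div_card_sub_le [Nonempty n] (x : Matrix n n 𝕜) (i : n) {C : ℝ}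
    (h : ∀ j, ‖x j j - x i i‖ ≤ C) : ‖trace x / Fintype.card n - x i i‖ ≤ C := by
  have hcard : (0 : ℝ) < Fintype.card n := Nat.cast_pos.2 Fintype.card_pos
  have hmean : trace x / Fintype.card n - x i i = (∑ j, (x j j - x i i)) / Fintype.card n := by
    rw [Finset.sum_sub_distrib, Finset.sum_const, Finset.card_univ, nsmul_eq_mul, trace]
    field_simp
    rfl
  rw [hmean, norm_div, RCLike.norm_natCast, div_le_iff₀ hcard]
  calc ‖∑ j, (x j j - x i i)‖ ≤ ∑ _j : n, C :=
        (norm_sum_le _ _).trans (Finset.sum_le_sum fun j _ => h j)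
    _ = C * Fintype.card n := by simp [mul_comm]

variable [DecidableEq n]

lemma norm_apply_le_l2_opNorm (A : Matrix m n 𝕜) (i : m) (j : n) : ‖A i j‖ ≤ ‖A‖ :=
  calc ‖A i j‖ = ‖(EuclideanSpace.equiv m 𝕜).symm (A *ᵥ EuclideanSpace.single j 1) i‖ := by
        simp [mulVec_single]
    _ ≤ ‖(EuclideanSpace.equiv m 𝕜).symm (A *ᵥ EuclideanSpace.single j 1)‖ :=
        PiLp.norm_apply_le _ i
    _ ≤ ‖A‖ * ‖EuclideanSpace.single j (1 : 𝕜)‖ := A.l2_opNorm_mulVec _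
    _ = ‖A‖ := by simp

lemma norm_le_l2_opNorm_of_mulVec_eq_smul {A : Matrix n n 𝕜} {v : n → 𝕜} {c : 𝕜}
    (hv : v ≠ 0) (hAv : A *ᵥ v = c • v) : ‖c‖ ≤ ‖A‖ := by
  have h := A.l2_opNorm_mulVec (WithLp.toLp 2 v)
  rw [hAv, map_smul, norm_smul] at h
  exact le_of_mul_le_mul_right h (by simpa using hv)

lemma diagonal_mul_sub_mul_diagonal_apply (d : n → 𝕜) (x : Matrix n n 𝕜) (i j : n) :
    (diagonal d * x - x * diagonal d) i j = (d i - d j) * x i j := by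
  simp only [sub_apply, diagonal_mul, mul_diagonal]
  ring

lemma permMatrix_mul_diagonal (σ : Equiv.Perm n) (d : n → 𝕜) :
    σ.permMatrix 𝕜 * diagonal d = diagonal (d ∘ σ) * σ.permMatrix 𝕜 := by
  ext i j
  rw [PEquiv.toMatrix_toPEquiv_mul, diagonal_mul]
  by_cases h : σ i = j <;> simp [h]

lemma norm_diag_sub_le_l2_opNorm_permMatrix_commutator (σ : Equiv.Perm n) (x : Matrix n n 𝕜)
    (i : n) : ‖x (σ i) (σ i) - x i i‖ ≤ ‖σ.permMatrix 𝕜 * x - x * σ.permMatrix 𝕜‖ := by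
  convert norm_apply_le_l2_opNorm (σ.permMatrix 𝕜 * x - x * σ.permMatrix 𝕜) i (σ i) using 2
  simp [PEquiv.toMatrix_toPEquiv_mul, PEquiv.mul_toMatrix_toPEquiv]

variable [DecidableEq m]

lemma l2_opNorm_single (i : m) (j : n) (c : 𝕜) : ‖single i j c‖ = ‖c‖ := by
  have h := l2_opNorm_conjTranspose_mul_self (single i j c)
  rw [conjTranspose_single, single_mul_single_same, ← diagonal_single, l2_opNorm_diagonal,
    Pi.norm_single, norm_mul, norm_star] at h
  exact (mul_self_inj (norm_nonneg _) (norm_nonneg _)).1 h.symm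

lemma l2_opNorm_le_of_forall_norm_apply_le (A : Matrix m n 𝕜) {C : ℝ}
    (h : ∀ i j, ‖A i j‖ ≤ C) : ‖A‖ ≤ Fintype.card m * Fintype.card n * C := by
  conv_lhs => rw [matrix_eq_sum_single A]
  calc ‖∑ i, ∑ j, single i j (A i j)‖ ≤ ∑ _i : m, ∑ _j : n, C := by
        refine (norm_sum_le _ _).trans (Finset.sum_le_sum fun i _ => ?_)
        refine (norm_sum_le _ _).trans (Finset.sum_le_sum fun j _ => ?_)
        rw [l2_opNorm_single]
        exact h i j
    _ = _ := by simp [mul_assoc]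

end Matrix

theorem dist_le_card_mul_of_dist_add_single_le {ι G X : Type*} [Fintype ι] [DecidableEq ι]
    [AddCommGroup G] [PseudoMetricSpace X] {d : (ι → G) → X} {C : ℝ}
    (h : ∀ f i a, dist (d (f + Pi.single i a)) (d f) ≤ C) (f g : ι → G) :
    dist (d g) (d f) ≤ Fintype.card ι * C := by
  have key : ∀ (v : ι → G) (s : Finset ι) f,
      dist (d (f + ∑ i ∈ s, Pi.single i (v i))) (d f) ≤ s.card * C := by
    intro v s
    induction s using Finset.induction_on with
    | empty => simp
    | insert a s ha ih =>
      intro f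
      calc dist (d (f + ∑ i ∈ insert a s, Pi.single i (v i))) (d f)
          ≤ dist (d ((f + Pi.single a (v a)) + ∑ i ∈ s, Pi.single i (v i)))
              (d (f + Pi.single a (v a))) + dist (d (f + Pi.single a (v a))) (d f) := by
            rw [Finset.sum_insert ha, ← add_assoc]
            exact dist_triangle _ _ _
        _ ≤ s.card * C + C := add_le_add (ih _) (h f a (v a))
        _ = (insert a s).card * C := by
            rw [Finset.card_insert_of_notMem ha]
            push_cast
            ring
  have := key (g - f) Finset.univ f
  rwa [Finset.univ_sum_single, add_sub_cancel] at this

section BitFlip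

variable {ι : Type*} [DecidableEq ι]

def bitFlip (j : ι) : Equiv.Perm (ι → Fin 2) := Equiv.addRight (Pi.single j 1)

lemma bitFlip_apply (j : ι) (f : ι → Fin 2) : bitFlip j f = f + Pi.single j 1 := rfl

lemma bitFlip_mul_self (j : ι) : bitFlip j * bitFlip j = 1 := by
  ext f : 1
  rw [Equiv.Perm.mul_apply, bitFlip_apply, bitFlip_apply, add_assoc, ← Pi.single_add,
    show (1 + 1 : Fin 2) = 0 from rfl, Pi.single_zero, add_zero, Equiv.Perm.one_apply]

lemma bitFlip_comm (i j : ι) : bitFlip i * bitFlip j = bitFlip j * bitFlip i := by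
  simp only [bitFlip, ← Equiv.addRight_add, add_comm]

lemma bitFlip_eq_iff (j : ι) (f g : ι → Fin 2) :
    bitFlip j f = g ↔ f j ≠ g j ∧ ∀ i, i ≠ j → f i = g i := by
  have hflip : ∀ a b : Fin 2, a + 1 = b ↔ a ≠ b := by decide
  rw [bitFlip_apply, funext_iff]
  constructor
  · intro h
    exact ⟨(hflip _ _).1 (by simpa using h j), fun i hi => by simpa [hi] using h i⟩
  · rintro ⟨hj, hi⟩ i
    rcases eq_or_ne i j with rfl | h
    · simpa using (hflip _ _).2 hj
    · simpa [h] using hi i h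

end BitFlip

noncomputable def pauliZ (n : ℕ) (j : Fin n) : Matrix (Fin n → Fin 2) (Fin n → Fin 2) ℂ :=
  diagonal fun f => if f j = 0 then 1 else -1

section Pauli

variable {n : ℕ}

lemma pauliX_eq_permMatrix (j : Fin n) : pauliX n j = (bitFlip j).permMatrix ℂ := by
  ext f g
  simp [pauliX, bitFlip_eq_iff]

lemma pauliY_eq_smul_pauliZ_mul_pauliX (j : Fin n) :
    pauliY n j = Complex.I • (pauliZ n j * pauliX n j) := by
  ext f g
  rw [Matrix.smul_apply, pauliZ, diagonal_mul, pauliX_eq_permMatrix]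
  simp only [pauliY, of_apply, PEquiv.toMatrix_apply, Equiv.toPEquiv_apply, Option.mem_def,
    Option.some_inj, bitFlip_eq_iff]
  rcases (by decide : ∀ a : Fin 2, a = 0 ∨ a = 1) (f j) with hf | hf <;>
    rcases (by decide : ∀ a : Fin 2, a = 0 ∨ a = 1) (g j) with hg | hg <;> simp [hf, hg]

lemma pauliX_commute (i j : Fin n) : Commute (pauliX n i) (pauliX n j) := by
  simp only [Commute, SemiconjBy, pauliX_eq_permMatrix, ← permMatrix_mul, bitFlip_comm]

lemma pauliX_mul_self (j : Fin n) : pauliX n j * pauliX n j = 1 := by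
  rw [pauliX_eq_permMatrix, ← permMatrix_mul, bitFlip_mul_self, permMatrix_one]

lemma pauliZ_commute_pauliX_of_ne {i j : Fin n} (h : i ≠ j) :
    Commute (pauliZ n j) (pauliX n i) := by
  refine (?_ : pauliX n i * pauliZ n j = pauliZ n j * pauliX n i).symm
  rw [pauliX_eq_permMatrix, pauliZ, permMatrix_mul_diagonal]
  congr 2
  funext f
  simp [bitFlip_apply, h.symm]

lemma pauliX_mul_pauliZ_self (j : Fin n) :
    pauliX n j * pauliZ n j = -(pauliZ n j * pauliX n j) := by
  rw [pauliX_eq_permMatrix, pauliZ, permMatrix_mul_diagonal, ← neg_mul, diagonal_neg]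
  congr 2
  funext f
  simp only [Function.comp_apply, bitFlip_apply, Pi.add_apply, Pi.single_eq_same]
  generalize f j = a
  fin_cases a <;> simp

lemma pauliY_commute_pauliX_of_ne {i j : Fin n} (h : i ≠ j) :
    Commute (pauliY n j) (pauliX n i) := by
  rw [pauliY_eq_smul_pauliZ_mul_pauliX]
  exact ((pauliZ_commute_pauliX_of_ne h).mul_left (pauliX_commute j i)).smul_left _

lemma pauliY_mul_pauliX_self (j : Fin n) :
    pauliY n j * pauliX n j = Complex.I • pauliZ n j := by
  rw [pauliY_eq_smul_pauliZ_mul_pauliX, smul_mul_assoc, mul_assoc, pauliX_mul_self, mul_one]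

lemma pauliY_mul_pauliX_sub_pauliX_mul_pauliY (j : Fin n) :
    pauliY n j * pauliX n j - pauliX n j * pauliY n j = (2 * Complex.I) • pauliZ n j := by
  rw [pauliY_mul_pauliX_self, pauliY_eq_smul_pauliZ_mul_pauliX, mul_smul_comm, ← mul_assoc,
    pauliX_mul_pauliZ_self, neg_mul, mul_assoc, pauliX_mul_self, mul_one, smul_neg,
    sub_neg_eq_add, ← two_smul ℂ, smul_smul]

lemma norm_pauliX (j : Fin n) : ‖pauliX n j‖ = 1 := by
  rw [pauliX_eq_permMatrix]
  exact permMatrix_l2_opNorm_eq _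

lemma norm_pauliZ (j : Fin n) : ‖pauliZ n j‖ = 1 := by
  rw [pauliZ, l2_opNorm_diagonal]
  refine le_antisymm ((pi_norm_le_iff_of_nonneg zero_le_one).2 fun f => by split_ifs <;> simp) ?_
  simpa using norm_le_pi_norm (fun f : Fin n → Fin 2 => if f j = 0 then (1 : ℂ) else -1) 0

lemma norm_pauliY_le (j : Fin n) : ‖pauliY n j‖ ≤ 1 := by
  rw [pauliY_eq_smul_pauliZ_mul_pauliX, norm_smul, Complex.norm_I, one_mul]
  simpa [norm_pauliZ, norm_pauliX] using l2_opNorm_mul (pauliZ n j) (pauliX n j)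

lemma trace_pauliX (j : Fin n) : trace (pauliX n j) = 0 := by
  simp [trace, pauliX]

lemma norm_sum_pauliX : ‖∑ i : Fin n, pauliX n i‖ = n := by
  refine le_antisymm ((norm_sum_le _ _).trans_eq (by simp [norm_pauliX])) ?_
  have hmulVec : (∑ i : Fin n, pauliX n i) *ᵥ (fun _ => 1) = (n : ℂ) • fun _ => 1 := by
    ext f
    simp [sum_mulVec, pauliX_eq_permMatrix, permMatrix_mulVec]
  simpa using norm_le_l2_opNorm_of_mulVec_eq_smul (one_ne_zero' ((Fin n → Fin 2) → ℂ)) hmulVec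

lemma commutator_pauliX_sum_pauliX (j : Fin n) :
    pauliX n j * (∑ i, pauliX n i) - (∑ i, pauliX n i) * pauliX n j = 0 :=
  sub_eq_zero.2 (Commute.sum_right _ _ _ fun i _ => pauliX_commute j i).eq

lemma commutator_pauliY_sum_pauliX (j : Fin n) :
    pauliY n j * (∑ i, pauliX n i) - (∑ i, pauliX n i) * pauliY n j
      = (2 * Complex.I) • pauliZ n j := by
  rw [Finset.mul_sum, Finset.sum_mul, ← Finset.sum_sub_distrib,
    Finset.sum_eq_single j (fun i _ hi => sub_eq_zero.2 (pauliY_commute_pauliX_of_ne hi).eq)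
      (fun h => absurd (Finset.mem_univ j) h),
    pauliY_mul_pauliX_sub_pauliX_mul_pauliY]

end Pauli

/-- The Lipschitz seminorm `‖|x|‖_S` for `S = {Xⱼ, Yⱼ}`. -/
noncomputable def pauliLipNorm (n : ℕ) (x : Matrix (Fin n → Fin 2) (Fin n → Fin 2) ℂ) : ℝ :=
  ⨆ j : Fin n, max ‖pauliX n j * x - x * pauliX n j‖ ‖pauliY n j * x - x * pauliY n j‖

section LipNorm

variable {n : ℕ}

lemma max_norm_commutator_le_pauliLipNorm (x : Matrix (Fin n → Fin 2) (Fin n → Fin 2) ℂ)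
    (j : Fin n) :
    max ‖pauliX n j * x - x * pauliX n j‖ ‖pauliY n j * x - x * pauliY n j‖
      ≤ pauliLipNorm n x :=
  Finite.le_ciSup
    (fun j => max ‖pauliX n j * x - x * pauliX n j‖ ‖pauliY n j * x - x * pauliY n j‖) j

lemma pauliLipNorm_smul (c : ℂ) (x : Matrix (Fin n → Fin 2) (Fin n → Fin 2) ℂ) :
    pauliLipNorm n (c • x) = ‖c‖ * pauliLipNorm n x := by
  simp only [pauliLipNorm, mul_smul_comm, smul_mul_assoc, ← smul_sub, norm_smul,
    ← mul_max_of_nonneg _ _ (norm_nonneg c)]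
  exact (Real.mul_iSup_of_nonneg (norm_nonneg c) _).symm

lemma pauliLipNorm_sum_pauliX [Nonempty (Fin n)] : pauliLipNorm n (∑ i, pauliX n i) = 2 := by
  simp [pauliLipNorm, commutator_pauliX_sum_pauliX, commutator_pauliY_sum_pauliX, norm_smul,
    norm_pauliZ]

variable {x : Matrix (Fin n → Fin 2) (Fin n → Fin 2) ℂ}
  (hX : ∀ j, ‖pauliX n j * x - x * pauliX n j‖ ≤ 1)
  (hY : ∀ j, ‖pauliY n j * x - x * pauliY n j‖ ≤ 1)
include hX

lemma dist_diag_le (f g : Fin n → Fin 2) : dist (x g g) (x f f) ≤ n := by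
  have hstep : ∀ f (j : Fin n) a,
      dist (x (f + Pi.single j a) (f + Pi.single j a)) (x f f) ≤ 1 := by
    intro f j a
    fin_cases a
    · simp
    · simpa [Complex.dist_eq, bitFlip_apply] using
        (norm_diag_sub_le_l2_opNorm_permMatrix_commutator (bitFlip j) x f).trans
          (pauliX_eq_permMatrix j ▸ hX j)
  simpa using dist_le_card_mul_of_dist_add_single_le (d := fun f => x f f) hstep f g

include hY

lemma norm_pauliZ_commutator_le (j : Fin n) : ‖pauliZ n j * x - x * pauliZ n j‖ ≤ 2 := by
  have hZ : pauliZ n j = (-Complex.I) • (pauliY n j * pauliX n j) := by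
    rw [pauliY_mul_pauliX_self, smul_smul]
    simp
  have hLeibniz : pauliZ n j * x - x * pauliZ n j = (-Complex.I) •
      (pauliY n j * (pauliX n j * x - x * pauliX n j)
        + (pauliY n j * x - x * pauliY n j) * pauliX n j) := by
    rw [hZ]
    simp only [smul_mul_assoc, mul_smul_comm, ← smul_sub]
    noncomm_ring
  rw [hLeibniz, norm_smul, norm_neg, Complex.norm_I, one_mul]
  calc ‖pauliY n j * (pauliX n j * x - x * pauliX n j)
          + (pauliY n j * x - x * pauliY n j) * pauliX n j‖
      ≤ ‖pauliY n j‖ * ‖pauliX n j * x - x * pauliX n j‖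
          + ‖pauliY n j * x - x * pauliY n j‖ * ‖pauliX n j‖ :=
        (norm_add_le _ _).trans (add_le_add (l2_opNorm_mul _ _) (l2_opNorm_mul _ _))
    _ ≤ 1 * 1 + 1 * 1 := by
        rw [norm_pauliX]
        gcongr
        exacts [norm_pauliY_le j, hX j, hY j]
    _ = 2 := by norm_num

lemma norm_apply_le_one_of_ne {f g : Fin n → Fin 2} (hfg : f ≠ g) : ‖x f g‖ ≤ 1 := by
  obtain ⟨j, hj⟩ := Function.ne_iff.1 hfg
  have hsign : ‖(if f j = 0 then (1 : ℂ) else -1) - if g j = 0 then 1 else -1‖ = 2 := by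
    rcases (by decide : ∀ a : Fin 2, a = 0 ∨ a = 1) (f j) with hf | hf <;>
      rcases (by decide : ∀ a : Fin 2, a = 0 ∨ a = 1) (g j) with hg | hg <;>
      simp_all <;> norm_num
  have h := (norm_apply_le_l2_opNorm _ f g).trans (norm_pauliZ_commutator_le hX hY j)
  rw [pauliZ, diagonal_mul_sub_mul_diagonal_apply, norm_mul, hsign] at h
  linarith

lemma norm_trace_smul_one_sub_le (hn : 1 ≤ n) :
    ‖(trace x / 2 ^ n) • (1 : Matrix (Fin n → Fin 2) (Fin n → Fin 2) ℂ) - x‖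
      ≤ 2 ^ n * 2 ^ n * n := by
  have hcard : (Fintype.card (Fin n → Fin 2) : ℂ) = 2 ^ n := by simp
  refine (l2_opNorm_le_of_forall_norm_apply_le (C := n) _ fun f g => ?_).trans_eq (by simp)
  rcases eq_or_ne f g with rfl | hfg
  · rw [Matrix.sub_apply, Matrix.smul_apply, one_apply_eq, smul_eq_mul, mul_one, ← hcard]
    exact norm_trace_div_card_sub_le x f fun g => Complex.dist_eq _ _ ▸ dist_diag_le hX f g
  · simpa [one_apply_ne hfg] using
      (norm_apply_le_one_of_ne hX hY hfg).trans (by exact_mod_cast hn)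

end LipNorm

lemma norm_trace_smul_one_sub_le_of_pauliLipNorm_le {n : ℕ}
    {x : Matrix (Fin n → Fin 2) (Fin n → Fin 2) ℂ} (hn : 1 ≤ n) (hx : pauliLipNorm n x ≤ 1) :
    ‖(trace x / 2 ^ n) • (1 : Matrix (Fin n → Fin 2) (Fin n → Fin 2) ℂ) - x‖
      ≤ 2 ^ n * 2 ^ n * n := by
  have hj j := (max_norm_commutator_le_pauliLipNorm x j).trans hx
  exact norm_trace_smul_one_sub_le (fun j => (le_max_left _ _).trans (hj j))
    (fun j => (le_max_right _ _).trans (hj j)) hn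

/-- On `n` qubits, `x = ∑ⱼ Xⱼ` has operator norm `n` and Lipschitz seminorm `2` with
respect to `S = {Xⱼ, Yⱼ}`; hence the Lipschitz complexity of the maximally mixed
replacer channel `Φ₂(ρ) = Tr(ρ) I/2ⁿ` is at least `n/2`. -/
theorem pauli_sum_complexity (n : ℕ) (hn : 1 ≤ n) :
    ‖∑ j : Fin n, pauliX n j‖ = n ∧
    (⨆ j : Fin n,
        max ‖pauliX n j * (∑ i : Fin n, pauliX n i) - (∑ i : Fin n, pauliX n i) * pauliX n j‖
            ‖pauliY n j * (∑ i : Fin n, pauliX n i) - (∑ i : Fin n, pauliX n i) * pauliY n j‖)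
      = 2 ∧
    (n : ℝ) / 2 ≤ sSup {c : ℝ | ∃ x : Matrix (Fin n → Fin 2) (Fin n → Fin 2) ℂ,
        (⨆ j : Fin n, max ‖pauliX n j * x - x * pauliX n j‖ ‖pauliY n j * x - x * pauliY n j‖) ≤ 1 ∧
        c = ‖(Matrix.trace x / 2 ^ n) • (1 : Matrix (Fin n → Fin 2) (Fin n → Fin 2) ℂ) - x‖} := by
  have : Nonempty (Fin n) := Fin.pos_iff_nonempty.1 hn
  refine ⟨norm_sum_pauliX, pauliLipNorm_sum_pauliX,
    le_csSup ⟨2 ^ n * 2 ^ n * n, ?_⟩ ⟨(2⁻¹ : ℂ) • ∑ i, pauliX n i, ?_, ?_⟩⟩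
  · rintro c ⟨x, hx, rfl⟩
    exact norm_trace_smul_one_sub_le_of_pauliLipNorm_le hn hx
  · change pauliLipNorm n _ ≤ 1
    rw [pauliLipNorm_smul, pauliLipNorm_sum_pauliX]
    norm_num
  · simp [trace_sum, trace_pauliX, norm_smul, norm_sum_pauliX]
    ring
end

section
/- Let Φ be a linear contraction (‖Φ^k‖ ≤ 1 for all k), T_t = e^{-t}Σ_{k≥0}(t^k/k!)Φ^k, and for N ≥ 1 define the truncation T_t^{[N]} = (Σ_{k=0}^N t^k e^{-t}/k!)^{-1} Σ_{k=0}^N (t^k e^{-t}/k!) Φ^k. Then for 0 < t < N+1, ‖T_t - T_t^{[N]}‖ ≤ 2·exp(N+1 - t - (N+1)·ln((N+1)/t)). -/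
/-! The error splits as `‖T_t - P‖ + ‖P - S⁻¹ • P‖`, where `P` is the partial sum up to `N` and
`S` its Poisson mass; as `‖Φ ^ k‖ ≤ 1`, each term is at most the tail mass `1 - S = ℙ(X ≥ M)`,
`X ~ Poisson(t)`, `M = N + 1`. Since `t^k ≤ (t/M)^M M^k` for `k ≥ M ≥ t`, that tail is at most
`e^{-t} (t/M)^M e^M`, which is the Chernoff bound on the right-hand side. -/

open scoped Nat
open Finset

section Renormalization

variable {F : Type*} [NormedAddCommGroup F] [NormedSpace ℝ F]

lemma norm_smul_le_of_norm_le_one {a : ℝ} (ha : 0 ≤ a) {x : F} (hx : ‖x‖ ≤ 1) : ‖a • x‖ ≤ a := by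
  rw [norm_smul, Real.norm_of_nonneg ha]
  exact mul_le_of_le_one_right ha hx

lemma norm_sub_inv_smul_le_one_sub {S : ℝ} (hS1 : S ≤ 1) {P : F} (hP : ‖P‖ ≤ S) :
    ‖P - S⁻¹ • P‖ ≤ 1 - S := by
  rcases ((norm_nonneg P).trans hP).eq_or_lt with rfl | hS
  · simpa using hP.trans zero_le_one
  have hinv : 1 ≤ S⁻¹ := (one_le_inv₀ hS).2 hS1
  calc ‖P - S⁻¹ • P‖ = (S⁻¹ - 1) * ‖P‖ := by
        rw [← neg_sub, norm_neg, show S⁻¹ • P - P = (S⁻¹ - 1) • P by rw [sub_smul, one_smul],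
          norm_smul, Real.norm_of_nonneg (by linarith)]
    _ ≤ (S⁻¹ - 1) * S := by gcongr
    _ = 1 - S := by field_simp

variable [CompleteSpace F] {p : ℕ → ℝ} {v : ℕ → F}

lemma norm_tsum_smul_sub_sum_smul_le (hp0 : ∀ k, 0 ≤ p k) (hp : Summable p)
    (hv : ∀ k, ‖v k‖ ≤ 1) (n : ℕ) :
    ‖∑' k, p k • v k - ∑ k ∈ range n, p k • v k‖ ≤ ∑' k, p (k + n) := by
  have hbound : ∀ k, ‖p k • v k‖ ≤ p k := fun k => norm_smul_le_of_norm_le_one (hp0 k) (hv k)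
  rw [← (Summable.of_norm_bounded hp hbound).sum_add_tsum_nat_add n, add_sub_cancel_left]
  exact tsum_of_norm_bounded ((summable_nat_add_iff n).2 hp).hasSum fun k => hbound (k + n)

lemma norm_tsum_smul_sub_normalized_sum_smul_le (hp0 : ∀ k, 0 ≤ p k) (hp : HasSum p 1)
    (hv : ∀ k, ‖v k‖ ≤ 1) (n : ℕ) :
    ‖∑' k, p k • v k - (∑ k ∈ range n, p k)⁻¹ • ∑ k ∈ range n, p k • v k‖ ≤
      2 * ∑' k, p (k + n) := by
  set S := ∑ k ∈ range n, p k
  set P := ∑ k ∈ range n, p k • v k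
  have hmass : S + ∑' k, p (k + n) = 1 := by
    rw [hp.summable.sum_add_tsum_nat_add n, hp.tsum_eq]
  have htail : 0 ≤ ∑' k, p (k + n) := tsum_nonneg fun k => hp0 _
  have hP : ‖P‖ ≤ S := (norm_sum_le _ _).trans <|
    sum_le_sum fun k _ => norm_smul_le_of_norm_le_one (hp0 k) (hv k)
  have hrenorm := norm_sub_inv_smul_le_one_sub (by linarith) hP
  calc ‖∑' k, p k • v k - S⁻¹ • P‖ ≤ ‖∑' k, p k • v k - P‖ + ‖P - S⁻¹ • P‖ :=
        norm_sub_le_norm_sub_add_norm_sub _ _ _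
    _ ≤ ∑' k, p (k + n) + (1 - S) :=
        add_le_add (norm_tsum_smul_sub_sum_smul_le hp0 hp.summable hv n) hrenorm
    _ = 2 * ∑' k, p (k + n) := by linarith

end Renormalization

lemma tsum_pow_div_factorial_nat_add_le {t : ℝ} (ht : 0 ≤ t) {M : ℕ} (htM : t ≤ M) :
    ∑' k, t ^ (k + M) / (k + M)! ≤ (t / M) ^ M * Real.exp M := by
  have hexp := NormedSpace.expSeries_div_hasSum_exp (M : ℝ)
  rw [← Real.exp_eq_exp_ℝ] at hexp
  have hterm : ∀ k, t ^ (k + M) ≤ (t / M) ^ M * (M : ℝ) ^ (k + M) := fun k => by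
    rcases M.eq_zero_or_pos with rfl | hM
    · obtain rfl : t = 0 := by simp at htM; linarith
      simp
    rw [pow_add, pow_add, div_pow, mul_comm ((M : ℝ) ^ k), ← mul_assoc,
      div_mul_cancel₀ _ (by positivity), mul_comm]
    gcongr
  calc ∑' k, t ^ (k + M) / (k + M)!
      ≤ ∑' k, (t / M) ^ M * ((M : ℝ) ^ (k + M) / (k + M)!) := by
        refine Summable.tsum_le_tsum (fun k => ?_) ?_ ?_
        · rw [← mul_div_assoc]; gcongr; exact hterm k
        · exact (summable_nat_add_iff M).2 (Real.summable_pow_div_factorial t)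
        · exact ((summable_nat_add_iff M).2 hexp.summable).mul_left _
    _ ≤ (t / M) ^ M * Real.exp M := by
        rw [tsum_mul_left, ← hexp.tsum_eq]
        exact mul_le_mul_of_nonneg_left (tsum_comp_le_tsum_of_inj hexp.summable
          (fun k => by positivity) (add_left_injective M)) (by positivity)

lemma poisson_tail_le {t : ℝ} (ht : 0 < t) {M : ℕ} (htM : t ≤ M) :
    ∑' k, Real.exp (-t) * t ^ (k + M) / (k + M)! ≤
      Real.exp (M - t - M * Real.log (M / t)) := by
  have hM : (0 : ℝ) < M := ht.trans_le htM
  have hchernoff : Real.exp (M - t - M * Real.log (M / t)) =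
      Real.exp (-t) * ((t / M) ^ M * Real.exp M) := by
    have hpow : (t / M) ^ M = Real.exp (M * (Real.log t - Real.log M)) := by
      rw [Real.exp_nat_mul, ← Real.log_div ht.ne' hM.ne', Real.exp_log (by positivity)]
    rw [hpow, ← Real.exp_add, ← Real.exp_add, Real.log_div hM.ne' ht.ne']
    ring_nf
  simp_rw [hchernoff, mul_div_assoc, tsum_mul_left]
  gcongr
  exact tsum_pow_div_factorial_nat_add_le ht.le htM

theorem poisson_truncation_error_general {E : Type*} [NormedAddCommGroup E] [NormedSpace ℝ E]
    [CompleteSpace E]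
    (Φ : E →L[ℝ] E) (hΦ : ∀ k : ℕ, ‖Φ ^ k‖ ≤ 1)
    (N : ℕ) (t : ℝ) (ht0 : 0 < t) (htN : t < N + 1) :
    ‖(∑' k : ℕ, (Real.exp (-t) * t ^ k / (k ! : ℝ)) • Φ ^ k) -
        (∑ k ∈ Finset.range (N + 1), Real.exp (-t) * t ^ k / (k ! : ℝ))⁻¹ •
          ∑ k ∈ Finset.range (N + 1), (Real.exp (-t) * t ^ k / (k ! : ℝ)) • Φ ^ k‖ ≤
      2 * Real.exp ((N + 1 : ℝ) - t - (N + 1) * Real.log ((N + 1) / t)) := by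
  have hmass : HasSum (fun k : ℕ => Real.exp (-t) * t ^ k / (k ! : ℝ)) 1 :=
    ProbabilityTheory.hasSum_one_poissonMeasure ⟨t, ht0.le⟩
  have htail := poisson_tail_le ht0 (M := N + 1) (by exact_mod_cast htN.le)
  push_cast at htail
  exact (norm_tsum_smul_sub_normalized_sum_smul_le (fun k => by positivity) hmass hΦ _).trans
    (by gcongr)

/-- Error of the truncated Poisson mixture: if `‖Φ^k‖ ≤ 1` for all `k`,
`T_t = e^{-t} ∑_{k≥0} (t^k/k!) Φ^k` and `T_t^{[N]}` is its renormalized truncation at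
order `N`, then for `0 < t < N+1`,
`‖T_t - T_t^{[N]}‖ ≤ 2 exp(N+1 - t - (N+1) log((N+1)/t))`. -/
theorem poisson_truncation_error {E : Type*} [NormedAddCommGroup E] [NormedSpace ℝ E]
    [CompleteSpace E]
    (Φ : E →L[ℝ] E) (hΦ : ∀ k : ℕ, ‖Φ ^ k‖ ≤ 1)
    (N : ℕ) (hN : 1 ≤ N) (t : ℝ) (ht0 : 0 < t) (htN : t < N + 1) :
    ‖(∑' k : ℕ, (Real.exp (-t) * t ^ k / (k ! : ℝ)) • Φ ^ k) -
        (∑ k ∈ Finset.range (N + 1), Real.exp (-t) * t ^ k / (k ! : ℝ))⁻¹ •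
          ∑ k ∈ Finset.range (N + 1), (Real.exp (-t) * t ^ k / (k ! : ℝ)) • Φ ^ k‖ ≤
      2 * Real.exp ((N + 1 : ℝ) - t - (N + 1) * Real.log ((N + 1) / t)) :=
  poisson_truncation_error_general Φ hΦ N t ht0 htN
end
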